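/- Let (Q, 𝔪, k) be a local Artinian ring with 𝔪³ = 0 admitting an exact pair of zero divisors (f, g), and assume the minimal number of generators e of 𝔪 is at least 2. Then the length of the ideal (f) equals e, and the length of f𝔪 equals e - 1. -/

import Mathlib

open IsLocalRing

/-- The length of a module, defined as the Krull dimension of its lattice of submodules. -/
noncomputable def moduleLength (Q M : Type) [CommRing Q] [AddCommGroup M] [Module Q M] : ℕ∞ :=
  (Order.krullDim (Submodule Q M)).unbotD 0

/-- The `n`-th coefficient of the Hilbert series of a local ring `Q`,
namely `dim_k (𝔪ⁿ/𝔪ⁿ⁺¹)`, computed as the length over `Q` of `𝔪ⁿ/𝔪ⁿ⁺¹`. -/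
noncomputable def hilbCoeff (Q : Type) [CommRing Q] [IsLocalRing Q] (n : ℕ) : ℕ∞ :=
  moduleLength Q
    (↥(maximalIdeal Q ^ n) ⧸
      (Submodule.comap (maximalIdeal Q ^ n).subtype (maximalIdeal Q ^ (n + 1))))

/-!
Multiplication by `f` maps `𝔪` onto `f𝔪` with kernel `ann f = (g)`, so `ℓ(𝔪) = ℓ((g)) + ℓ(f𝔪)`.
Since `𝔪³ = 0`, `𝔪²` annihilates `f` and hence lies in `(g)`; and `g ∉ 𝔪²`, for otherwise
`𝔪 ⊆ ann g = (f)` would be principal, contradicting `e ≥ 2`. So `(g)/𝔪²` is one-dimensional over `k`,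
and so is `(f)/f𝔪` by Nakayama: `ℓ((g)) = ℓ(𝔪²) + 1` and `ℓ((f)) = ℓ(f𝔪) + 1`. Comparing with
`ℓ(𝔪) = ℓ(𝔪²) + e` gives `ℓ(f𝔪) = e - 1`.
-/

theorem moduleLength_eq_length (Q M : Type) [CommRing Q] [AddCommGroup M] [Module Q M] :
    moduleLength Q M = Module.length Q M := by
  rw [moduleLength, ← Module.coe_length, WithBot.unbotD_coe]

theorem Submodule.length_eq_length_add_length_quotient {R M : Type*} [Ring R] [AddCommGroup M]
    [Module R M] {p q : Submodule R M} (h : p ≤ q) :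
    Module.length R q = Module.length R p + Module.length R (q ⧸ p.comap q.subtype) := by
  refine Module.length_eq_add_of_exact (Submodule.inclusion h) (Submodule.mkQ _)
    (Submodule.inclusion_injective h) (Submodule.mkQ_surjective _) ?_
  rw [LinearMap.exact_iff, Submodule.ker_mkQ, Submodule.range_inclusion]

theorem Ideal.length_eq_length_add_length_span_singleton_mul {R : Type*} [CommRing R]
    {I J : Ideal R} {f : R} (hann : ∀ x, x * f = 0 ↔ x ∈ J) (hJI : J ≤ I) :
    Module.length R I = Module.length R J + Module.length R (span {f} * I) := by
  have hmul : ∀ x ∈ I, LinearMap.mulLeft R f x ∈ span {f} * I := fun x hx =>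
    mul_mem_mul (mem_span_singleton_self f) hx
  refine Module.length_eq_add_of_exact (Submodule.inclusion hJI)
    ((LinearMap.mulLeft R f).restrict hmul) (Submodule.inclusion_injective hJI) ?_ ?_
  · rintro ⟨y, hy⟩
    obtain ⟨z, hz, rfl⟩ := mem_span_singleton_mul.mp hy
    exact ⟨⟨z, hz⟩, rfl⟩
  · rw [LinearMap.exact_iff, Submodule.range_inclusion]
    ext x
    simp [Subtype.ext_iff, mul_comm f, hann]

namespace IsLocalRing

section

variable {Q : Type*} [CommRing Q] [IsLocalRing Q]

theorem mem_maximalIdeal_of_mul_eq_zero {a b : Q} (hb : b ≠ 0) (hab : a * b = 0) :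
    a ∈ maximalIdeal Q :=
  (mem_maximalIdeal a).mpr fun ha => hb (ha.mul_right_eq_zero.mp hab)

theorem length_le_one_of_maximalIdeal_smul_eq_zero {M : Type*} [AddCommGroup M]
    [Module Q M] (x : M) (hx : ∀ y : M, ∃ c : Q, c • x = y)
    (hm : ∀ c ∈ maximalIdeal Q, c • x = 0) : Module.length Q M ≤ 1 := by
  have hker : maximalIdeal Q ≤ LinearMap.ker (LinearMap.toSpanSingleton Q M x) := hm
  have : IsSimpleModule Q (Q ⧸ maximalIdeal Q) :=
    isSimpleModule_iff_isCoatom.mpr (maximalIdeal.isMaximal Q).out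
  calc Module.length Q M
      ≤ Module.length Q (Q ⧸ maximalIdeal Q) :=
        Module.length_le_of_surjective ((maximalIdeal Q).liftQ _ hker) fun y => by
          obtain ⟨c, rfl⟩ := hx y
          exact ⟨Submodule.Quotient.mk c, rfl⟩
    _ = 1 := Module.length_eq_one _ _

theorem length_span_singleton_quotient_le_one {K : Ideal Q} {h : Q}
    (hmK : ∀ c ∈ maximalIdeal Q, c * h ∈ K) :
    Module.length Q (↥(Ideal.span {h}) ⧸ Submodule.comap (Ideal.span {h}).subtype K) ≤ 1 := by
  refine length_le_one_of_maximalIdeal_smul_eq_zero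
    (Submodule.Quotient.mk ⟨h, Ideal.mem_span_singleton_self h⟩) (fun y => ?_) fun c hc => ?_
  · obtain ⟨⟨z, hz⟩, rfl⟩ := Submodule.Quotient.mk_surjective _ y
    obtain ⟨c, rfl⟩ := Ideal.mem_span_singleton'.mp hz
    exact ⟨c, rfl⟩
  · rw [← Submodule.Quotient.mk_smul, Submodule.Quotient.mk_eq_zero]
    exact hmK c hc

theorem length_span_singleton_eq_length_add_one {K : Ideal Q} {h : Q}
    (hK : K ≤ Ideal.span {h}) (hmK : ∀ c ∈ maximalIdeal Q, c * h ∈ K) (hhK : h ∉ K) :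
    Module.length Q (Ideal.span {h}) = Module.length Q K + 1 := by
  rw [Submodule.length_eq_length_add_length_quotient hK]
  congr 1
  refine le_antisymm (length_span_singleton_quotient_le_one hmK) ?_
  have hne : (Submodule.Quotient.mk ⟨h, Ideal.mem_span_singleton_self h⟩ :
      ↥(Ideal.span {h}) ⧸ Submodule.comap (Ideal.span {h}).subtype K) ≠ 0 := by
    rwa [ne_eq, Submodule.Quotient.mk_eq_zero]
  have := nontrivial_of_ne _ _ hne
  exact Order.one_le_iff_pos.mpr Module.length_pos

theorem length_span_singleton_eq_length_mul_maximalIdeal_add_one {f : Q} (hf : f ≠ 0) :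
    Module.length Q (Ideal.span {f}) = Module.length Q ↥(Ideal.span {f} * maximalIdeal Q) + 1 := by
  refine length_span_singleton_eq_length_add_one Ideal.mul_le_left
    (fun c hc => mul_comm f c ▸ Ideal.mul_mem_mul (Ideal.mem_span_singleton_self f) hc) ?_
  intro hf'
  obtain ⟨z, hz, hfz⟩ := Ideal.mem_span_singleton_mul.mp hf'
  have : f * (1 - z) = 0 := by rw [mul_sub, mul_one, hfz, sub_self]
  exact hf ((isUnit_one_sub_self_of_mem_nonunits z hz).mul_left_eq_zero.mp this)

section CubeZero

variable (h3 : maximalIdeal Q ^ 3 = ⊥)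
include h3

theorem mul_eq_zero_of_mem_sq {x y : Q} (hx : x ∈ maximalIdeal Q ^ 2)
    (hy : y ∈ maximalIdeal Q) : x * y = 0 := by
  have := Ideal.mul_mem_mul hx hy
  rwa [← pow_succ, h3, Ideal.mem_bot] at this

theorem span_singleton_eq_maximalIdeal_of_mem_sq {f g : Q}
    (hf : f ∈ maximalIdeal Q) (hg : g ∈ maximalIdeal Q ^ 2)
    (hann : ∀ x : Q, x * g = 0 ↔ x ∈ Ideal.span {f}) : Ideal.span {f} = maximalIdeal Q :=
  le_antisymm ((Ideal.span_singleton_le_iff_mem _).mpr hf) fun x hx =>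
    (hann x).mp (mul_comm g x ▸ mul_eq_zero_of_mem_sq h3 hg hx)

theorem length_span_singleton_eq_length_sq_add_one {f g : Q} (hf : f ∈ maximalIdeal Q)
    (hg : g ∈ maximalIdeal Q) (hann : ∀ x : Q, x * f = 0 ↔ x ∈ Ideal.span {g})
    (hg2 : g ∉ maximalIdeal Q ^ 2) :
    Module.length Q (Ideal.span {g}) = Module.length Q ↥(maximalIdeal Q ^ 2) + 1 :=
  length_span_singleton_eq_length_add_one
    (fun x hx => (hann x).mp (mul_eq_zero_of_mem_sq h3 hx hf))
    (fun _ hc => pow_two (maximalIdeal Q) ▸ Ideal.mul_mem_mul hc hg) hg2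

end CubeZero

end

section HilbCoeff

variable {Q : Type} [CommRing Q] [IsLocalRing Q]

theorem hilbCoeff_one_eq_length :
    hilbCoeff Q 1 = Module.length Q
      (↥(maximalIdeal Q) ⧸ Submodule.comap (maximalIdeal Q).subtype (maximalIdeal Q ^ 2)) := by
  rw [hilbCoeff, moduleLength_eq_length, pow_one]

theorem length_maximalIdeal_eq_length_sq_add_hilbCoeff :
    Module.length Q (maximalIdeal Q) = Module.length Q ↥(maximalIdeal Q ^ 2) + hilbCoeff Q 1 := by
  rw [Submodule.length_eq_length_add_length_quotient (Ideal.pow_le_self two_ne_zero),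
    hilbCoeff_one_eq_length]

theorem hilbCoeff_one_le_one_of_maximalIdeal_eq_span {h : Q}
    (hm : maximalIdeal Q = Ideal.span {h}) : hilbCoeff Q 1 ≤ 1 := by
  rw [hilbCoeff_one_eq_length, hm]
  exact length_span_singleton_quotient_le_one fun c hc =>
    pow_two (Ideal.span {h}) ▸ Ideal.mul_mem_mul (hm ▸ hc) (Ideal.mem_span_singleton_self h)

theorem notMem_sq_of_two_le_hilbCoeff
    (h3 : maximalIdeal Q ^ 3 = ⊥) (he2 : 2 ≤ hilbCoeff Q 1) {f g : Q} (hf : f ∈ maximalIdeal Q)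
    (hann : ∀ x : Q, x * g = 0 ↔ x ∈ Ideal.span {f}) : g ∉ maximalIdeal Q ^ 2 := fun hg => by
  have := he2.trans (hilbCoeff_one_le_one_of_maximalIdeal_eq_span
    (span_singleton_eq_maximalIdeal_of_mem_sq h3 hf hg hann).symm)
  exact absurd this (by decide)

end HilbCoeff

end IsLocalRing

/-- Let `(Q,𝔪,k)` be a local Artinian ring with `𝔪³ = 0` admitting an exact pair of zero
divisors `(f,g)`, and assume the minimal number of generators `e` of `𝔪` (i.e.
`dim_k 𝔪/𝔪²`) is at least `2`.  Then `ℓ((f)) = e` and `ℓ(f𝔪) = e - 1`. -/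
theorem length_of_exact_zero_divisor_ideal
    (Q : Type) [CommRing Q] [IsLocalRing Q] [IsArtinianRing Q]
    (h3 : maximalIdeal Q ^ 3 = ⊥)
    (e : ℕ) (he : hilbCoeff Q 1 = e) (he2 : 2 ≤ e)
    (f g : Q) (hf : f ≠ 0) (hg : g ≠ 0)
    (hannf : ∀ x : Q, x * f = 0 ↔ x ∈ Ideal.span {g})
    (hanng : ∀ x : Q, x * g = 0 ↔ x ∈ Ideal.span {f}) :
    moduleLength Q ↥(Ideal.span {f}) = (e : ℕ∞) ∧
      moduleLength Q ↥(Ideal.span {f} * maximalIdeal Q) = ((e - 1 : ℕ) : ℕ∞) := by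
  have hfg : f * g = 0 := (hanng f).mpr (Ideal.mem_span_singleton_self f)
  have hfm : f ∈ maximalIdeal Q := mem_maximalIdeal_of_mul_eq_zero hg hfg
  have hgm : g ∈ maximalIdeal Q := mem_maximalIdeal_of_mul_eq_zero hf (mul_comm f g ▸ hfg)
  have hg2 : g ∉ maximalIdeal Q ^ 2 :=
    notMem_sq_of_two_le_hilbCoeff h3 (by rw [he]; exact_mod_cast he2) hfm hanng
  have hA := length_maximalIdeal_eq_length_sq_add_hilbCoeff (Q := Q)
  have hB := length_span_singleton_eq_length_sq_add_one h3 hfm hgm hannf hg2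
  have hC := Ideal.length_eq_length_add_length_span_singleton_mul hannf
    ((Ideal.span_singleton_le_iff_mem _).mpr hgm)
  have hD := length_span_singleton_eq_length_mul_maximalIdeal_add_one hf
  have hsum : Module.length Q ↥(maximalIdeal Q ^ 2) + e = Module.length Q ↥(maximalIdeal Q ^ 2) +
      (Module.length Q ↥(Ideal.span {f} * maximalIdeal Q) + 1) := by
    rw [← he, ← hA, hC, hB, add_right_comm, add_assoc]
  have he' := WithTop.add_left_cancel Module.length_ne_top hsum
  have hL : Module.length Q ↥(Ideal.span {f} * maximalIdeal Q) + 1 = ((e - 1 : ℕ) : ℕ∞) + 1 := by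
    rw [← he']
    norm_cast
    omega
  rw [moduleLength_eq_length, moduleLength_eq_length, hD, ← he']
  exact ⟨rfl, WithTop.add_right_cancel ENat.one_ne_top hL⟩
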